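/- arXiv:2511.19163 — 2 statements merged into one kernel-verified Lean document; each statement's English description precedes it below -/
import Mathlib

section
/- Let f : ℝ^n → ℝ be defined by f(x) = g(‖x‖) where g : ℝ₊ → ℝ is proper, closed, and nondecreasing with g attaining its minimum over ℝ₊ at 0 when restricted appropriately. Then for λ > 0 and x ≠ 0, prox_{λf}(x) = (x/‖x‖)·prox_{λ g̃}(‖x‖), where g̃(t) = g(|t|) on ℝ; and prox_{λf}(0) = {0} when 0 is the minimizer of t ↦ λg(t) + t²/2 over ℝ₊. -/
theorem prox_of_spherically_symmetric (n : ℕ) (lam : ℝ) (hlam : 0 < lam)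
    (g : ℝ → ℝ) (hg : MonotoneOn g (Set.Ici 0))
    (hgcl : LowerSemicontinuous g) :
    (∀ x : EuclideanSpace ℝ (Fin n), x ≠ 0 →
      ((∀ r : ℝ,
          IsMinOn (fun t : ℝ => g |t| + (1 / (2 * lam)) * (‖x‖ - t) ^ 2) Set.univ r →
          IsMinOn (fun u : EuclideanSpace ℝ (Fin n) =>
            g ‖u‖ + (1 / (2 * lam)) * ‖x - u‖ ^ 2) Set.univ ((r / ‖x‖) • x)) ∧
        (∀ u : EuclideanSpace ℝ (Fin n),
          IsMinOn (fun u : EuclideanSpace ℝ (Fin n) =>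
            g ‖u‖ + (1 / (2 * lam)) * ‖x - u‖ ^ 2) Set.univ u →
          ∃ r : ℝ,
            IsMinOn (fun t : ℝ => g |t| + (1 / (2 * lam)) * (‖x‖ - t) ^ 2) Set.univ r ∧
            u = (r / ‖x‖) • x))) ∧
    ((∀ t : ℝ, 0 ≤ t → t ≠ 0 → lam * g 0 < lam * g t + t ^ 2 / 2) →
      ∀ u : EuclideanSpace ℝ (Fin n),
        IsMinOn (fun u : EuclideanSpace ℝ (Fin n) =>
          g ‖u‖ + (1 / (2 * lam)) * ‖(0 : EuclideanSpace ℝ (Fin n)) - u‖ ^ 2) Set.univ u ↔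
        u = 0) := by
  have hc : (0:ℝ) < 1 / (2 * lam) := by positivity
  constructor
  · intro x hx
    have hxn : 0 < ‖x‖ := norm_pos_iff.mpr hx
    have hxn' : ‖x‖ ≠ 0 := ne_of_gt hxn
    have hnorm1 : ∀ r : ℝ, ‖(r / ‖x‖) • x‖ = |r| := by
      intro r
      rw [norm_smul, Real.norm_eq_abs, abs_div, abs_norm, div_mul_cancel₀ _ hxn']
    have hnorm2 : ∀ r : ℝ, ‖x - (r / ‖x‖) • x‖ = |‖x‖ - r| := by
      intro r
      have h : x - (r / ‖x‖) • x = ((‖x‖ - r) / ‖x‖) • x := by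
        rw [sub_div, div_self hxn', sub_smul, one_smul]
      rw [h, norm_smul, Real.norm_eq_abs, abs_div, abs_norm, div_mul_cancel₀ _ hxn']
    -- value of F at a radial point equals φ
    have hval : ∀ r : ℝ,
        g ‖(r / ‖x‖) • x‖ + (1 / (2 * lam)) * ‖x - (r / ‖x‖) • x‖ ^ 2
          = g |r| + (1 / (2 * lam)) * (‖x‖ - r) ^ 2 := by
      intro r
      rw [hnorm1, hnorm2, sq_abs]
    -- F(u) ≥ φ(‖u‖)
    have hkey : ∀ u : EuclideanSpace ℝ (Fin n),
        g |‖u‖| + (1 / (2 * lam)) * (‖x‖ - ‖u‖) ^ 2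
          ≤ g ‖u‖ + (1 / (2 * lam)) * ‖x - u‖ ^ 2 := by
      intro u
      rw [abs_of_nonneg (norm_nonneg u)]
      have h1 : |‖x‖ - ‖u‖| ≤ ‖x - u‖ := abs_norm_sub_norm_le x u
      have h2 : (‖x‖ - ‖u‖) ^ 2 ≤ ‖x - u‖ ^ 2 := by
        rw [← sq_abs (‖x‖ - ‖u‖)]
        exact pow_le_pow_left₀ (abs_nonneg _) h1 2
      nlinarith [hc, h2]
    constructor
    · intro r hr
      rw [isMinOn_univ_iff] at hr ⊢
      intro u
      calc g ‖(r / ‖x‖) • x‖ + (1 / (2 * lam)) * ‖x - (r / ‖x‖) • x‖ ^ 2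
          = g |r| + (1 / (2 * lam)) * (‖x‖ - r) ^ 2 := hval r
        _ ≤ g |‖u‖| + (1 / (2 * lam)) * (‖x‖ - ‖u‖) ^ 2 := hr ‖u‖
        _ ≤ g ‖u‖ + (1 / (2 * lam)) * ‖x - u‖ ^ 2 := hkey u
    · intro u hu
      rw [isMinOn_univ_iff] at hu
      refine ⟨‖u‖, ?_, ?_⟩
      · rw [isMinOn_univ_iff]
        intro t
        calc g |‖u‖| + (1 / (2 * lam)) * (‖x‖ - ‖u‖) ^ 2
            ≤ g ‖u‖ + (1 / (2 * lam)) * ‖x - u‖ ^ 2 := hkey u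
          _ ≤ g ‖(t / ‖x‖) • x‖ + (1 / (2 * lam)) * ‖x - (t / ‖x‖) • x‖ ^ 2 :=
              hu ((t / ‖x‖) • x)
          _ = g |t| + (1 / (2 * lam)) * (‖x‖ - t) ^ 2 := hval t
      · -- equality case: u is radial
        have h1 := hu ((‖u‖ / ‖x‖) • x)
        rw [hval ‖u‖, abs_of_nonneg (norm_nonneg u)] at h1
        -- so ‖x - u‖² ≤ (‖x‖ - ‖u‖)²
        have h2 : ‖x - u‖ ^ 2 ≤ (‖x‖ - ‖u‖) ^ 2 := by nlinarith [hc, h1]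
        have h3 : (‖x‖ - ‖u‖) ^ 2 ≤ ‖x - u‖ ^ 2 := by
          rw [← sq_abs (‖x‖ - ‖u‖)]
          exact pow_le_pow_left₀ (abs_nonneg _) (abs_norm_sub_norm_le x u) 2
        have h4 : ‖x - u‖ ^ 2 = (‖x‖ - ‖u‖) ^ 2 := le_antisymm h2 h3
        have h5 : (inner ℝ x u : ℝ) = ‖x‖ * ‖u‖ := by
          have he : ‖x - u‖ ^ 2 = ‖x‖ ^ 2 - 2 * (inner ℝ x u : ℝ) + ‖u‖ ^ 2 := by
            rw [@norm_sub_sq_real]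
          nlinarith [h4, he]
        have h6 : ‖u‖ • x = ‖x‖ • u := (inner_eq_norm_mul_iff_real).mp h5
        have h7 : u = (‖x‖)⁻¹ • (‖u‖ • x) := by
          rw [h6, smul_smul, inv_mul_cancel₀ hxn', one_smul]
        conv_lhs => rw [h7]
        rw [smul_smul, div_eq_inv_mul]
  · intro hcond u
    have hz : ∀ v : EuclideanSpace ℝ (Fin n),
        ‖(0 : EuclideanSpace ℝ (Fin n)) - v‖ = ‖v‖ := by
      intro v; rw [zero_sub, norm_neg]
    have hstrict : ∀ v : EuclideanSpace ℝ (Fin n), v ≠ 0 →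
        g 0 < g ‖v‖ + (1 / (2 * lam)) * ‖v‖ ^ 2 := by
      intro v hv
      have hvn : ‖v‖ ≠ 0 := by simpa using hv
      have h := hcond ‖v‖ (norm_nonneg v) hvn
      have hrw : g ‖v‖ + (1 / (2 * lam)) * ‖v‖ ^ 2
          = (lam * g ‖v‖ + ‖v‖ ^ 2 / 2) / lam := by
        field_simp
      rw [hrw, lt_div_iff₀ hlam]
      linarith [h]
    constructor
    · intro hu
      rw [isMinOn_univ_iff] at hu
      by_contra hne
      have h1 := hu 0
      rw [hz u] at h1
      simp only [sub_self, norm_zero] at h1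
      have h2 := hstrict u hne
      nlinarith [h1, h2]
    · intro hu
      subst hu
      rw [isMinOn_univ_iff]
      intro v
      rw [hz v]
      simp only [sub_self, norm_zero]
      by_cases hv : v = 0
      · subst hv; simp
      · have := hstrict v hv
        nlinarith [this]
end

section
/- Let λ > 0 and ε > 0, and consider the one-dimensional capped-log function ψ(t) = log(1 + |t|/ε) for |t| < ν and ψ(t) = C for |t| ≥ ν, where ν = ε(e^C − 1) and C > 0. Then argmin_{u ≥ 0} { ½(u − s)² + λψ(u) } is attained at u₁*(s) = min{(prox_{λg}(s))₊, ν} or u₂*(s) = max{s, ν}, whichever yields the smaller objective value, where g(t) = log(1 + |t|/ε). -/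
theorem capped_log_prox_via_two_candidates (eps lam C : ℝ)
    (heps : 0 < eps) (hlam : 0 < lam) (hC : 0 < C)
    (s : ℝ) (hs : 0 ≤ s)
    (ψ g : ℝ → ℝ)
    (hg : ∀ t, g t = Real.log (1 + |t| / eps))
    (hψ : ∀ t, ψ t =
      if |t| < eps * (Real.exp C - 1) then Real.log (1 + |t| / eps) else C)
    (r : ℝ)
    (hr : IsMinOn (fun u : ℝ => g u + (1 / (2 * lam)) * (s - u) ^ 2) Set.univ r)
    (u₁ u₂ : ℝ)
    (hu₁ : u₁ = min (max r 0) (eps * (Real.exp C - 1)))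
    (hu₂ : u₂ = max s (eps * (Real.exp C - 1))) :
    ((1 / 2) * (u₁ - s) ^ 2 + lam * ψ u₁ ≤ (1 / 2) * (u₂ - s) ^ 2 + lam * ψ u₂ →
      IsMinOn (fun u : ℝ => (1 / 2) * (u - s) ^ 2 + lam * ψ u) (Set.Ici 0) u₁) ∧
    ((1 / 2) * (u₂ - s) ^ 2 + lam * ψ u₂ ≤ (1 / 2) * (u₁ - s) ^ 2 + lam * ψ u₁ →
      IsMinOn (fun u : ℝ => (1 / 2) * (u - s) ^ 2 + lam * ψ u) (Set.Ici 0) u₂) := by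
  set ν : ℝ := eps * (Real.exp C - 1) with hν_def
  have hexpC : (1 : ℝ) < Real.exp C := by
    nlinarith [Real.add_one_le_exp C]
  have hν : 0 < ν := by
    have : 0 < Real.exp C - 1 := by linarith
    positivity
  -- g is nonneg
  have hg_nonneg : ∀ t, 0 ≤ g t := by
    intro t
    rw [hg]
    apply Real.log_nonneg
    have : 0 ≤ |t| / eps := by positivity
    linarith
  -- g ν = C
  have hgν : g ν = C := by
    rw [hg, abs_of_nonneg hν.le]
    have h1 : 1 + ν / eps = Real.exp C := by
      field_simp [hν_def]
      rw [hν_def]; ring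
    rw [h1, Real.log_exp]
  -- ψ on [0, ν]
  have hψ_le : ∀ t, 0 ≤ t → t ≤ ν → ψ t = g t := by
    intro t ht htν
    rw [hψ]
    split_ifs with h
    · rw [hg]
    · have habs : |t| = t := abs_of_nonneg ht
      have : t = ν := le_antisymm htν (not_lt.mp (by rw [habs] at h; exact h))
      rw [this, hgν]
  -- ψ on [ν, ∞)
  have hψ_ge : ∀ t, ν ≤ t → ψ t = C := by
    intro t ht
    rw [hψ, if_neg]
    rw [abs_of_nonneg (le_trans hν.le ht)]
    exact not_lt.mpr ht
  -- C ≤ g t for t ≥ ν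
  have hgC : ∀ t, ν ≤ t → C ≤ g t := by
    intro t ht
    have ht0 : 0 ≤ t := le_trans hν.le ht
    rw [hg, abs_of_nonneg ht0]
    rw [Real.le_log_iff_exp_le (by positivity)]
    have : Real.exp C - 1 ≤ t / eps := by
      rw [le_div_iff₀ heps]
      nlinarith [ht]
    linarith
  -- r' := max r 0 is also a global minimizer of the prox objective
  set r' : ℝ := max r 0 with hr'_def
  have hr'0 : 0 ≤ r' := le_max_right r 0
  have hmin : ∀ u : ℝ, g r' + (1 / (2 * lam)) * (s - r') ^ 2 ≤
      g u + (1 / (2 * lam)) * (s - u) ^ 2 := by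
    intro u
    have hru : g r + (1 / (2 * lam)) * (s - r) ^ 2 ≤
        g u + (1 / (2 * lam)) * (s - u) ^ 2 := hr (Set.mem_univ u)
    rcases le_or_gt 0 r with h0 | h0
    · rwa [hr'_def, max_eq_left h0]
    · rw [hr'_def, max_eq_right h0.le]
      have hg0 : g 0 = 0 := by
        rw [hg]; simp
      have hq : (s - 0) ^ 2 ≤ (s - r) ^ 2 := by nlinarith
      have hgr : 0 ≤ g r := hg_nonneg r
      have hc : 0 ≤ (1 : ℝ) / (2 * lam) := by positivity
      have := mul_le_mul_of_nonneg_left hq hc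
      calc g 0 + (1 / (2 * lam)) * (s - 0) ^ 2
          ≤ g r + (1 / (2 * lam)) * (s - r) ^ 2 := by rw [hg0]; linarith
        _ ≤ _ := hru
  -- expansion identity
  have hexpand : ∀ v : ℝ, lam * (g v + (1 / (2 * lam)) * (s - v) ^ 2)
      = (1 / 2) * (v - s) ^ 2 + lam * g v := by
    intro v
    field_simp
    ring
  -- scaled minimality
  have hmin' : ∀ u : ℝ, (1 / 2) * (r' - s) ^ 2 + lam * g r' ≤
      (1 / 2) * (u - s) ^ 2 + lam * g u := by
    intro u
    have := mul_le_mul_of_nonneg_left (hmin u) hlam.le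
    rw [hexpand, hexpand] at this
    exact this
  -- u₂ facts
  have hu₂ν : ν ≤ u₂ := by rw [hu₂]; exact le_max_right _ _
  have hψu₂ : ψ u₂ = C := hψ_ge u₂ hu₂ν
  have quad : ∀ v, ν ≤ v → (u₂ - s) ^ 2 ≤ (v - s) ^ 2 := by
    intro v hv
    rw [hu₂]
    rcases le_total ν s with hc | hc
    · rw [max_eq_left hc]
      have : (0:ℝ) ≤ (v - s) ^ 2 := sq_nonneg _
      simpa using this
    · rw [max_eq_right hc]
      nlinarith
  -- F u₂ ≤ F v for any v ≥ ν where ψ v contributes at least C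
  have hFu₂ : ∀ v, ν ≤ v → (1 / 2) * (u₂ - s) ^ 2 + lam * ψ u₂ ≤
      (1 / 2) * (v - s) ^ 2 + lam * C := by
    intro v hv
    rw [hψu₂]
    have := quad v hv
    nlinarith
  -- u₁ facts
  have hu₁0 : 0 ≤ u₁ := by rw [hu₁]; exact le_min hr'0 hν.le
  have hu₁ν : u₁ ≤ ν := by rw [hu₁]; exact min_le_right _ _
  have hψu₁ : ψ u₁ = g u₁ := hψ_le u₁ hu₁0 hu₁ν
  -- the key dichotomy
  have key : ∀ u, 0 ≤ u →
      ((1 / 2) * (u₁ - s) ^ 2 + lam * ψ u₁ ≤ (1 / 2) * (u - s) ^ 2 + lam * ψ u) ∨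
      ((1 / 2) * (u₂ - s) ^ 2 + lam * ψ u₂ ≤ (1 / 2) * (u - s) ^ 2 + lam * ψ u) := by
    intro u hu
    rcases lt_or_ge u ν with huν | huν
    · -- u ∈ [0, ν): ψ u = g u
      have hψu : ψ u = g u := hψ_le u hu huν.le
      rcases le_total r' ν with hrν | hrν
      · -- u₁ = r'
        left
        have hu₁r : u₁ = r' := by rw [hu₁]; exact min_eq_left hrν
        rw [hψu₁, hψu, hu₁r]
        exact hmin' u
      · -- r' ≥ ν : F u ≥ lam * h r' ≥ ½(r'-s)² + lam C ≥ F u₂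
        right
        have h1 : (1 / 2) * (r' - s) ^ 2 + lam * g r' ≤
            (1 / 2) * (u - s) ^ 2 + lam * g u := hmin' u
        have h2 : C ≤ g r' := hgC r' hrν
        have h3 := hFu₂ r' hrν
        rw [hψu]
        nlinarith
    · -- u ≥ ν
      right
      have hψu : ψ u = C := hψ_ge u huν
      rw [hψu]
      exact hFu₂ u huν
  constructor
  · intro hle
    intro u hu
    have hu0 : 0 ≤ u := hu
    rcases key u hu0 with h | h
    · exact h
    · exact le_trans hle h
  · intro hle
    intro u hu
    have hu0 : 0 ≤ u := hu
    rcases key u hu0 with h | h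
    · exact le_trans hle h
    · exact h
end
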